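/- Suppose that: (1) E has a single vertex and at least two edges; and (2) G acts faithfully on E^∞, i.e. if g·ξ = ξ for all ξ ∈ E^∞ then g = 1. Then the standard action of S_{G,E} on E^∞ is topologically free. -/
import Mathlib


/-- Finite paths in a directed graph: `Pth.nil x` is the length-zero path at the
vertex `x`, and `Pth.cons e p` is the path whose first edge is `e`, followed by `p`. -/
inductive Pth (V : Type) (Ed : Type) : Type where
  | nil : V → Pth V Ed
  | cons : Ed → Pth V Ed → Pth V Ed

/-- A self-similar graph `(G, E, φ)`: a group `G` acting on a directed graph `E`
(with vertex set `V`, edge set `Ed`, range `r` and source `d`) by graph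
automorphisms, together with a one-cocycle `φ : G × E¹ → G` for the action on
edges, satisfying `φ(g,e)·x = g·x` for all vertices `x`. -/
structure SelfSimGraph (G V Ed : Type) [Group G] : Type where
  r : Ed → V
  d : Ed → V
  actV : G → V → V
  actE : G → Ed → Ed
  actV_one : ∀ x, actV 1 x = x
  actV_mul : ∀ g h x, actV (g * h) x = actV g (actV h x)
  actE_one : ∀ e, actE 1 e = e
  actE_mul : ∀ g h e, actE (g * h) e = actE g (actE h e)
  r_act : ∀ g e, r (actE g e) = actV g (r e)
  d_act : ∀ g e, d (actE g e) = actV g (d e)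
  phi : G → Ed → G
  phi_cocycle : ∀ g h e, phi (g * h) e = phi g (actE h e) * phi h e
  phi_vertex : ∀ g e x, actV (phi g e) x = actV g x

variable {G V Ed : Type} [Group G]

/-- The range `r(α)` of a finite path. -/
def rngP (S : SelfSimGraph G V Ed) : Pth V Ed → V
  | Pth.nil x => x
  | Pth.cons e _ => S.r e

/-- The source `d(α)` of a finite path. -/
def srcP (S : SelfSimGraph G V Ed) : Pth V Ed → V
  | Pth.nil x => x
  | Pth.cons _ p => srcP S p

/-- Well-formedness of a finite path: consecutive edges match, `d(αᵢ) = r(αᵢ₊₁)`. -/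
def WFP (S : SelfSimGraph G V Ed) : Pth V Ed → Prop
  | Pth.nil _ => True
  | Pth.cons e p => S.d e = rngP S p ∧ WFP S p

/-- The length of a finite path. -/
def lenP : Pth V Ed → ℕ
  | Pth.nil _ => 0
  | Pth.cons _ p => lenP p + 1

/-- Concatenation `αβ` of finite paths (meaningful when `d(α) = r(β)`). -/
def compP : Pth V Ed → Pth V Ed → Pth V Ed
  | Pth.nil _, q => q
  | Pth.cons e p, q => Pth.cons e (compP p q)

/-- The action of `G` extended to finite paths:
`g·x = g·x` on vertices and `g·(eα) = (g·e)(φ(g,e)·α)`. -/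
def actP (S : SelfSimGraph G V Ed) : G → Pth V Ed → Pth V Ed
  | g, Pth.nil x => Pth.nil (S.actV g x)
  | g, Pth.cons e p => Pth.cons (S.actE g e) (actP S (S.phi g e) p)

/-- The cocycle extended to finite paths:
`φ(g,x) = g` on vertices and `φ(g, eα) = φ(φ(g,e), α)`. -/
def phiP (S : SelfSimGraph G V Ed) : G → Pth V Ed → G
  | g, Pth.nil _ => g
  | g, Pth.cons e p => phiP S (S.phi g e) p

/-- A path `τ` is strongly fixed by `g` if `g·τ = τ` and `φ(g,τ) = 1`. -/
def StronglyFixed (S : SelfSimGraph G V Ed) (g : G) (τ : Pth V Ed) : Prop :=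
  WFP S τ ∧ actP S g τ = τ ∧ phiP S g τ = 1

/-- `(G,E,φ)` is pseudo free if `g·e = e` and `φ(g,e) = 1` imply `g = 1`. -/
def PseudoFree (S : SelfSimGraph G V Ed) : Prop :=
  ∀ (g : G) (e : Ed), S.actE g e = e → S.phi g e = 1 → g = 1

/-- `p` is a prefix (initial segment) of `q`: `q = pε` for some path `ε`. -/
def IsPrefixP (S : SelfSimGraph G V Ed) (p q : Pth V Ed) : Prop :=
  ∃ ε, WFP S ε ∧ rngP S ε = srcP S p ∧ compP p ε = q

/-- The set `M_g` of minimal strongly fixed paths for `g`: strongly fixed paths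
none of whose proper prefixes is strongly fixed. -/
def MinSF (S : SelfSimGraph G V Ed) (g : G) : Set (Pth V Ed) :=
  {μ | StronglyFixed S g μ ∧ ∀ p, IsPrefixP S p μ → p ≠ μ → ¬StronglyFixed S g p}

/-- Well-formedness of an infinite path, viewed as a sequence of edges:
`d(ξᵢ) = r(ξᵢ₊₁)`. -/
def InfWF (S : SelfSimGraph G V Ed) (ξ : ℕ → Ed) : Prop :=
  ∀ i, S.d (ξ i) = S.r (ξ (i + 1))

/-- The range `r(ξ)` of an infinite path. -/
def rngInf (S : SelfSimGraph G V Ed) (ξ : ℕ → Ed) : V := S.r (ξ 0)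

/-- `takeP S ξ n` is the finite path `ξ|ₙ = ξ₁⋯ξₙ` (with `ξ|₀ = r(ξ₁)`). -/
def takeP (S : SelfSimGraph G V Ed) : (ℕ → Ed) → ℕ → Pth V Ed
  | ξ, 0 => Pth.nil (S.r (ξ 0))
  | ξ, n + 1 => Pth.cons (ξ 0) (takeP S (fun i => ξ (i + 1)) n)

/-- Membership of an infinite path in the cylinder `Z(α)`:
the initial segment of `ξ` of length `|α|` equals `α`. -/
def InZ (S : SelfSimGraph G V Ed) (α : Pth V Ed) (ξ : ℕ → Ed) : Prop :=
  takeP S ξ (lenP α) = α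

/-- The infinite path `αξ` obtained by prepending a finite path to an infinite one. -/
def prepSeq : Pth V Ed → (ℕ → Ed) → ℕ → Ed
  | Pth.nil _, ξ, n => ξ n
  | Pth.cons e _, _, 0 => e
  | Pth.cons _ p, ξ, n + 1 => prepSeq p ξ n

/-- Dropping the first `k` edges of an infinite path. -/
def dropSeq (k : ℕ) (ξ : ℕ → Ed) : ℕ → Ed := fun n => ξ (n + k)

/-- The space `E^∞` of infinite paths. -/
def InfPath (S : SelfSimGraph G V Ed) : Type := {ξ : ℕ → Ed // InfWF S ξ}

/-- The topology of `E^∞`: the subspace topology induced from the product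
topology on `(E¹)^ℕ`, `E¹` being discrete.  Its basis consists of the
cylinders `Z(α)`. -/
def infTop (S : SelfSimGraph G V Ed) : TopologicalSpace (InfPath S) :=
  TopologicalSpace.induced (fun ξ => ξ.1)
    (@Pi.topologicalSpace ℕ (fun _ => Ed) (fun _ => ⊥))

/-- Specification of the (unique) action of `G` on `E^∞`: `(g·ξ)|ₙ = g·(ξ|ₙ)`. -/
def ActSpec (S : SelfSimGraph G V Ed) (act : G → (ℕ → Ed) → ℕ → Ed) : Prop :=
  ∀ (g : G) (ξ : ℕ → Ed) (n : ℕ), takeP S (act g ξ) n = actP S g (takeP S ξ n)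

/-- The action of a triple `s = (α, g, β) ∈ S_{G,E}` on `E^∞`: it sends
`βξ ∈ Z(β)` to `α(g·ξ)`. -/
def sActSeq (S : SelfSimGraph G V Ed) (act : G → (ℕ → Ed) → ℕ → Ed)
    (α : Pth V Ed) (g : G) (β : Pth V Ed) (ξ : ℕ → Ed) : ℕ → Ed :=
  prepSeq α (act g (dropSeq (lenP β) ξ))

/-- The set of fixed points in `E^∞` of the element `s = (α, g, β)` of `S_{G,E}`. -/
def FixSet (S : SelfSimGraph G V Ed) (act : G → (ℕ → Ed) → ℕ → Ed)
    (α : Pth V Ed) (g : G) (β : Pth V Ed) : Set (InfPath S) :=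
  {η | InZ S β η.1 ∧ sActSeq S act α g β η.1 = η.1}

/-- A vertex `x` is simple if `r⁻¹(x)` is a singleton. -/
def SimpleVtx (S : SelfSimGraph G V Ed) (x : V) : Prop := ∃! e : Ed, S.r e = x

/-- A path `γ = γ₁⋯γₙ` has no entry if `d(γᵢ)` is simple for every `i`. -/
def NoEntry (S : SelfSimGraph G V Ed) : Pth V Ed → Prop
  | Pth.nil _ => True
  | Pth.cons e p => SimpleVtx S (S.d e) ∧ NoEntry S p

/-- A circuit: a path `γ` of nonzero length with `d(γ) = r(γ)`. -/
def Circuit (S : SelfSimGraph G V Ed) (γ : Pth V Ed) : Prop :=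
  WFP S γ ∧ 1 ≤ lenP γ ∧ srcP S γ = rngP S γ

/-- A `G`-circuit: a pair `(g,γ)` with `γ` of nonzero length and `d(γ) = g·r(γ)`. -/
def GCircuit (S : SelfSimGraph G V Ed) (g : G) (γ : Pth V Ed) : Prop :=
  WFP S γ ∧ 1 ≤ lenP γ ∧ srcP S γ = S.actV g (rngP S γ)

/-- `g` is slack at `x` if all sufficiently long paths with range `x` are
strongly fixed by `g`. -/
def SlackAt (S : SelfSimGraph G V Ed) (g : G) (x : V) : Prop :=
  ∃ n : ℕ, ∀ γ, WFP S γ → rngP S γ = x → n ≤ lenP γ → StronglyFixed S g γ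

/-- The sequence `(γⁿ, gₙ)` attached to a `G`-circuit `(g, γ)`:
`γ¹ = γ`, `g₁ = g`, `γⁿ⁺¹ = gₙ·γⁿ`, `gₙ₊₁ = φ(gₙ, γⁿ)` (indexed from `0`). -/
def circIter (S : SelfSimGraph G V Ed) (g : G) (γ : Pth V Ed) : ℕ → Pth V Ed × G
  | 0 => (γ, g)
  | n + 1 =>
      (actP S (circIter S g γ n).2 (circIter S g γ n).1,
       phiP S (circIter S g γ n).2 (circIter S g γ n).1)

/-- The finite concatenation `γ¹γ²⋯γⁿ`. -/
def circConcat (S : SelfSimGraph G V Ed) (g : G) (γ : Pth V Ed) : ℕ → Pth V Ed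
  | 0 => Pth.nil (rngP S γ)
  | n + 1 => compP (circConcat S g γ n) (circIter S g γ n).1

/-- `ξ` is the infinite concatenation `ξ(g,γ) = γ¹γ²γ³⋯`: it is an infinite path
whose initial segments are the finite concatenations `γ¹⋯γⁿ`. -/
def IsCircPath (S : SelfSimGraph G V Ed) (g : G) (γ : Pth V Ed) (ξ : ℕ → Ed) : Prop :=
  InfWF S ξ ∧ ∀ n, takeP S ξ (lenP (circConcat S g γ n)) = circConcat S g γ n

/-- `x ⇀ y`: there is a finite path with source `x` and range `y`. -/
def RelPath (S : SelfSimGraph G V Ed) (x y : V) : Prop :=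
  ∃ α, WFP S α ∧ srcP S α = x ∧ rngP S α = y

/-- `x ∼ y`: `x` and `y` are in the same `G`-orbit. -/
def RelOrb (S : SelfSimGraph G V Ed) (x y : V) : Prop :=
  ∃ g : G, S.actV g x = y

/-- `x ≫ y`: there is a vertex `u` with `x ⇀ u ∼ y`. -/
def RelGG (S : SelfSimGraph G V Ed) (x y : V) : Prop :=
  ∃ u, RelPath S x u ∧ RelOrb S u y

/-- A nonzero element `(α, g, β)` of `S_{G,E}`: `α, β ∈ E*`, `g ∈ G`, with
`d(α) = g·d(β)`. -/
def SGETriple (S : SelfSimGraph G V Ed) : Type :=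
  {t : Pth V Ed × G × Pth V Ed //
    WFP S t.1 ∧ WFP S t.2.2 ∧ srcP S t.1 = S.actV t.2.1 (srcP S t.2.2)}

/-- The inverse semigroup `S_{G,E}` (as a set): the triples together with `0 = none`. -/
def SGE (S : SelfSimGraph G V Ed) : Type := Option (SGETriple S)

/-- Forget the membership proofs. -/
def sgeToRaw (S : SelfSimGraph G V Ed) : SGE S → Option (Pth V Ed × G × Pth V Ed) :=
  Option.map Subtype.val

/-- The adjoint: `(α, g, β)* = (β, g⁻¹, α)`, `0* = 0`. -/
def starSGE (S : SelfSimGraph G V Ed) : SGE S → SGE S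
  | none => none
  | some s =>
      some ⟨(s.1.2.2, s.1.2.1⁻¹, s.1.1),
        ⟨s.2.2.1, s.2.1, by
          rw [s.2.2.2, ← S.actV_mul, inv_mul_cancel, S.actV_one]⟩⟩

/-- The idempotent `f_α = (α, 1, α)`. -/
def fIdem (S : SelfSimGraph G V Ed) (α : Pth V Ed) (h : WFP S α) : SGE S :=
  some ⟨(α, 1, α), ⟨h, h, by rw [S.actV_one]⟩⟩

/-- Specification of the multiplication of `S_{G,E}`:
`0` is absorbing; `(α,g,β)(γ,h,δ) = (α(g·ε), φ(g,ε)h, δ)` if `γ = βε`;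
`(α,g,β)(γ,h,δ) = (α, gφ(h⁻¹,ε)⁻¹, δ(h⁻¹·ε))` if `β = γε`; `0` otherwise. -/
def MulSpec (S : SelfSimGraph G V Ed) (mul : SGE S → SGE S → SGE S) : Prop :=
  (∀ t, mul none t = none) ∧
  (∀ s, mul s none = none) ∧
  (∀ (s t : SGETriple S) (ε : Pth V Ed),
     WFP S ε → rngP S ε = srcP S s.1.2.2 → t.1.1 = compP s.1.2.2 ε →
       sgeToRaw S (mul (some s) (some t)) =
         some (compP s.1.1 (actP S s.1.2.1 ε), phiP S s.1.2.1 ε * t.1.2.1, t.1.2.2)) ∧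
  (∀ (s t : SGETriple S) (ε : Pth V Ed),
     WFP S ε → rngP S ε = srcP S t.1.1 → s.1.2.2 = compP t.1.1 ε →
       sgeToRaw S (mul (some s) (some t)) =
         some (s.1.1, s.1.2.1 * (phiP S t.1.2.1⁻¹ ε)⁻¹,
               compP t.1.2.2 (actP S t.1.2.1⁻¹ ε))) ∧
  (∀ (s t : SGETriple S),
     (¬∃ ε, WFP S ε ∧ rngP S ε = srcP S s.1.2.2 ∧ t.1.1 = compP s.1.2.2 ε) →
     (¬∃ ε, WFP S ε ∧ rngP S ε = srcP S t.1.1 ∧ s.1.2.2 = compP t.1.1 ε) →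
       mul (some s) (some t) = none)

/-- Topological freeness of the standard action of `S_{G,E}` on `E^∞`: for every
nonzero `s = (α, g, β)`, every interior fixed point `ζ` of `s` satisfies `α = β`
and `ζ ∈ Z(ατ)` for some `τ` strongly fixed by `g`. -/
def TopFree (S : SelfSimGraph G V Ed) (act : G → (ℕ → Ed) → ℕ → Ed) : Prop :=
  ∀ (α : Pth V Ed) (g : G) (β : Pth V Ed),
    WFP S α → WFP S β → srcP S α = S.actV g (srcP S β) →
    ∀ ζ : InfPath S, ζ ∈ @interior (InfPath S) (infTop S) (FixSet S act α g β) →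
      α = β ∧ ∃ τ : Pth V Ed, WFP S τ ∧ rngP S τ = srcP S α ∧
        StronglyFixed S g τ ∧ InZ S (compP α τ) ζ.1

section Aux19

variable {G V Ed : Type} [Group G]

lemma phi_one19 (S : SelfSimGraph G V Ed) (e : Ed) : S.phi 1 e = 1 := by
  have h := S.phi_cocycle 1 1 e
  rw [one_mul, S.actE_one] at h
  exact left_eq_mul.mp h

lemma actP_one19 (S : SelfSimGraph G V Ed) : ∀ p : Pth V Ed, actP S 1 p = p
  | Pth.nil x => by show Pth.nil (S.actV 1 x) = Pth.nil x; rw [S.actV_one]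
  | Pth.cons e p => by
      show Pth.cons (S.actE 1 e) (actP S (S.phi 1 e) p) = Pth.cons e p
      rw [S.actE_one, phi_one19, actP_one19 S p]

lemma actP_mul19 (S : SelfSimGraph G V Ed) : ∀ (p : Pth V Ed) (g h : G),
    actP S (g * h) p = actP S g (actP S h p)
  | Pth.nil x, g, h => by
      show Pth.nil (S.actV (g * h) x) = Pth.nil (S.actV g (S.actV h x))
      rw [S.actV_mul]
  | Pth.cons e p, g, h => by
      show Pth.cons (S.actE (g * h) e) (actP S (S.phi (g * h) e) p) =
        Pth.cons (S.actE g (S.actE h e))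
          (actP S (S.phi g (S.actE h e)) (actP S (S.phi h e) p))
      rw [S.actE_mul, S.phi_cocycle, actP_mul19 S p]

lemma actP_inj19 (S : SelfSimGraph G V Ed) (g : G) {p q : Pth V Ed}
    (h : actP S g p = actP S g q) : p = q := by
  have h2 := congrArg (actP S g⁻¹) h
  rwa [← actP_mul19, ← actP_mul19, inv_mul_cancel, actP_one19, actP_one19] at h2

/-- The list of edges of a finite path. -/
def edgesP19 : Pth V Ed → List Ed
  | Pth.nil _ => []
  | Pth.cons e p => e :: edgesP19 p

lemma pth_ext19 [Subsingleton V] : ∀ {p q : Pth V Ed}, edgesP19 p = edgesP19 q → p = q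
  | Pth.nil x, Pth.nil y, _ => by rw [Subsingleton.elim x y]
  | Pth.nil _, Pth.cons _ _, h => by simp [edgesP19] at h
  | Pth.cons _ _, Pth.nil _, h => by simp [edgesP19] at h
  | Pth.cons e p, Pth.cons f q, h => by
      simp only [edgesP19, List.cons.injEq] at h
      rw [h.1, pth_ext19 h.2]

lemma edges_takeP19 (S : SelfSimGraph G V Ed) : ∀ (n : ℕ) (ξ : ℕ → Ed),
    edgesP19 (takeP S ξ n) = (List.range n).map ξ
  | 0, ξ => rfl
  | n+1, ξ => by
      rw [List.range_succ_eq_map]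
      show ξ 0 :: edgesP19 (takeP S (fun i => ξ (i+1)) n) = _
      rw [edges_takeP19 S n, List.map_cons, List.map_map]
      rfl

lemma lenP_takeP19 (S : SelfSimGraph G V Ed) : ∀ (n : ℕ) (ξ : ℕ → Ed),
    lenP (takeP S ξ n) = n
  | 0, _ => rfl
  | n+1, ξ => by
      show lenP (takeP S (fun i => ξ (i+1)) n) + 1 = n + 1
      rw [lenP_takeP19]

lemma takeP_coord19 (S : SelfSimGraph G V Ed) {ξ ξ' : ℕ → Ed} {n : ℕ}
    (h : takeP S ξ n = takeP S ξ' n) : ∀ i, i < n → ξ i = ξ' i := by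
  intro i hi
  have h2 := congrArg edgesP19 h
  rw [edges_takeP19, edges_takeP19] at h2
  have h3 := congrArg (fun l => l[i]?) h2
  simpa [List.getElem?_map, List.getElem?_range, hi] using h3

lemma takeP_congr19 (S : SelfSimGraph G V Ed) [Subsingleton V] {ξ ξ' : ℕ → Ed} {n : ℕ}
    (h : ∀ i, i < n → ξ i = ξ' i) : takeP S ξ n = takeP S ξ' n := by
  apply pth_ext19
  rw [edges_takeP19, edges_takeP19]
  exact List.map_congr_left (fun i hi => h i (List.mem_range.mp hi))

lemma seq_ext19 (S : SelfSimGraph G V Ed) {ξ ξ' : ℕ → Ed}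
    (h : ∀ n, takeP S ξ n = takeP S ξ' n) : ξ = ξ' :=
  funext fun i => takeP_coord19 S (h (i+1)) i (Nat.lt_succ_self i)

lemma prepSeq_add19 : ∀ (p : Pth V Ed) (ξ : ℕ → Ed) (n : ℕ),
    prepSeq p ξ (lenP p + n) = ξ n
  | Pth.nil _, ξ, n => by
      show ξ (0 + n) = ξ n
      rw [Nat.zero_add]
  | Pth.cons e p, ξ, n => by
      have h : lenP (Pth.cons e p) + n = (lenP p + n) + 1 := by
        show lenP p + 1 + n = _
        omega
      rw [h]
      show prepSeq p ξ (lenP p + n) = ξ n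
      exact prepSeq_add19 p ξ n

lemma prepSeq_drop19 (p : Pth V Ed) (ξ : ℕ → Ed) :
    dropSeq (lenP p) (prepSeq p ξ) = ξ := by
  funext n
  show prepSeq p ξ (n + lenP p) = ξ n
  rw [Nat.add_comm]
  exact prepSeq_add19 p ξ n

lemma takeP_prepSeq19 (S : SelfSimGraph G V Ed) [Subsingleton V] :
    ∀ (p : Pth V Ed) (ξ : ℕ → Ed), takeP S (prepSeq p ξ) (lenP p) = p
  | Pth.nil x, ξ => congrArg Pth.nil (Subsingleton.elim _ _)
  | Pth.cons e p, ξ => by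
      show Pth.cons (prepSeq (Pth.cons e p) ξ 0)
        (takeP S (fun i => prepSeq (Pth.cons e p) ξ (i+1)) (lenP p)) = Pth.cons e p
      have h : (fun i => prepSeq (Pth.cons e p) ξ (i+1)) = prepSeq p ξ := rfl
      rw [h]
      show Pth.cons e (takeP S (prepSeq p ξ) (lenP p)) = Pth.cons e p
      rw [takeP_prepSeq19 S p ξ]

lemma lenP_compP19 : ∀ p q : Pth V Ed, lenP (compP p q) = lenP p + lenP q
  | Pth.nil _, q => by
      show lenP q = 0 + lenP q
      rw [Nat.zero_add]
  | Pth.cons e p, q => by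
      show lenP (compP p q) + 1 = (lenP p + 1) + lenP q
      rw [lenP_compP19 p q]
      omega

lemma compP_left_cancel19 : ∀ (p q q' : Pth V Ed), compP p q = compP p q' → q = q'
  | Pth.nil _, q, q', h => h
  | Pth.cons e p, q, q', h => by
      have h2 : compP p q = compP p q' := by
        have := h
        simp only [compP, Pth.cons.injEq] at this
        exact this.2
      exact compP_left_cancel19 p q q' h2

lemma takeP_add19 (S : SelfSimGraph G V Ed) [Subsingleton V] :
    ∀ (a b : ℕ) (ξ : ℕ → Ed),
      takeP S ξ (a + b) = compP (takeP S ξ a) (takeP S (dropSeq a ξ) b)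
  | 0, b, ξ => by
      show takeP S ξ (0 + b) = takeP S (dropSeq 0 ξ) b
      have h : dropSeq 0 ξ = ξ := rfl
      rw [h, Nat.zero_add]
  | a+1, b, ξ => by
      have h1 : a + 1 + b = (a + b) + 1 := by omega
      rw [h1]
      show Pth.cons (ξ 0) (takeP S (fun i => ξ (i+1)) (a + b)) =
        Pth.cons (ξ 0) (compP (takeP S (fun i => ξ (i+1)) a)
          (takeP S (dropSeq (a+1) ξ) b))
      rw [takeP_add19 S a b (fun i => ξ (i+1))]
      have h2 : dropSeq a (fun i => ξ (i+1)) = dropSeq (a+1) ξ := rfl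
      rw [h2]

lemma actP_compP19 (S : SelfSimGraph G V Ed) :
    ∀ (p q : Pth V Ed) (g : G),
      actP S g (compP p q) = compP (actP S g p) (actP S (phiP S g p) q)
  | Pth.nil x, q, g => rfl
  | Pth.cons e p, q, g => by
      show Pth.cons (S.actE g e) (actP S (S.phi g e) (compP p q)) =
        Pth.cons (S.actE g e) (compP (actP S (S.phi g e) p)
          (actP S (phiP S (S.phi g e) p) q))
      rw [actP_compP19 S p q (S.phi g e)]

lemma prepSeq_takeP19 (S : SelfSimGraph G V Ed) :
    ∀ (n : ℕ) (ζ ξ : ℕ → Ed) (i : ℕ),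
      prepSeq (takeP S ζ n) ξ i = if i < n then ζ i else ξ (i - n)
  | 0, ζ, ξ, i => by
      show ξ i = _
      simp
  | n+1, ζ, ξ, 0 => by
      show ζ 0 = _
      simp
  | n+1, ζ, ξ, i+1 => by
      show prepSeq (takeP S (fun j => ζ (j+1)) n) ξ i = _
      rw [prepSeq_takeP19 S n]
      by_cases h : i < n
      · simp [h, Nat.succ_lt_succ_iff]
      · simp [h, Nat.succ_lt_succ_iff, Nat.succ_sub_succ]

lemma wfp_all19 (S : SelfSimGraph G V Ed) [Subsingleton V] : ∀ p : Pth V Ed, WFP S p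
  | Pth.nil _ => trivial
  | Pth.cons e p => ⟨Subsingleton.elim _ _, wfp_all19 S p⟩

lemma act_agree19 (S : SelfSimGraph G V Ed) [Subsingleton V]
    {act : G → (ℕ → Ed) → ℕ → Ed} (hact : ActSpec S act)
    (g : G) {ξ ξ' : ℕ → Ed} {n : ℕ} (h : ∀ i, i ≤ n → ξ i = ξ' i) :
    act g ξ n = act g ξ' n := by
  have h1 : takeP S ξ (n+1) = takeP S ξ' (n+1) :=
    takeP_congr19 S (fun i hi => h i (Nat.lt_succ_iff.mp hi))
  have h2 : takeP S (act g ξ) (n+1) = takeP S (act g ξ') (n+1) := by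
    rw [hact, hact, h1]
  exact takeP_coord19 S h2 n (Nat.lt_succ_self n)

lemma act_ne19 (S : SelfSimGraph G V Ed) [Subsingleton V]
    {act : G → (ℕ → Ed) → ℕ → Ed} (hact : ActSpec S act)
    (g : G) {ξ ξ' : ℕ → Ed} {n : ℕ} (h : ∀ i, i < n → ξ i = ξ' i)
    (hne : ξ n ≠ ξ' n) : act g ξ n ≠ act g ξ' n := by
  intro heq
  apply hne
  have h1 : takeP S (act g ξ) (n+1) = takeP S (act g ξ') (n+1) := by
    apply takeP_congr19 S
    intro i hi
    rcases Nat.lt_succ_iff_lt_or_eq.mp hi with hi' | hi'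
    · exact act_agree19 S hact g (fun j hj => h j (lt_of_le_of_lt hj hi'))
    · rw [hi']; exact heq
  rw [hact, hact] at h1
  have h2 := actP_inj19 S g h1
  exact takeP_coord19 S h2 n (Nat.lt_succ_self n)

lemma exists_ne_edge19 {Ed : Type} (h : ∃ e f : Ed, e ≠ f) (x : Ed) :
    ∃ e, e ≠ x := by
  obtain ⟨e, f, hef⟩ := h
  by_cases hex : e = x
  · exact ⟨f, fun hfx => hef (hex.trans hfx.symm)⟩
  · exact ⟨e, hex⟩

lemma cylinder_of_interior19 (S : SelfSimGraph G V Ed)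
    {A : Set (InfPath S)} {ζ : InfPath S}
    (h : ζ ∈ @interior (InfPath S) (infTop S) A) :
    ∃ N, ∀ η : InfPath S, (∀ i, i < N → η.1 i = ζ.1 i) → η ∈ A := by
  letI : TopologicalSpace (InfPath S) := infTop S
  rw [mem_interior] at h
  obtain ⟨t, hts, htopen, hζt⟩ := h
  unfold infTop at htopen
  obtain ⟨W, hW, hpre⟩ :=
    (@isOpen_induced_iff (InfPath S) (ℕ → Ed)
      (@Pi.topologicalSpace ℕ (fun _ => Ed) (fun _ => ⊥)) t
      (fun ξ : InfPath S => ξ.1)).mp htopen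
  have hζW : ζ.1 ∈ W := by
    have h2 : ζ ∈ (fun ξ : InfPath S => ξ.1) ⁻¹' W := by rw [hpre]; exact hζt
    exact h2
  obtain ⟨I, u, hu, hsub⟩ :=
    (@isOpen_pi_iff ℕ (fun _ => Ed) (fun _ => ⊥) W).mp hW ζ.1 hζW
  refine ⟨I.sup id + 1, fun η hη => ?_⟩
  have hmem : η.1 ∈ (I : Set ℕ).pi u := by
    intro i hi
    have hi' : i ∈ I := hi
    have hlt : i < I.sup id + 1 :=
      Nat.lt_succ_of_le (Finset.le_sup (f := id) hi')
    rw [hη i hlt]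
    exact (hu i hi').2
  have hmem2 : η ∈ t := by
    rw [← hpre]
    exact hsub hmem
  exact hts hmem2

end Aux19

/-- If `E` has a single vertex and at least two edges, and `G` acts faithfully
on `E^∞`, then the standard action of `S_{G,E}` on `E^∞` is topologically
free. -/
theorem statement19 {G V Ed : Type} [Group G] [Fintype V] [Fintype Ed]
    (S : SelfSimGraph G V Ed) (hNoSources : ∀ x : V, ∃ e : Ed, S.r e = x)
    (hOneVtx : Nonempty V) (hSingle : Subsingleton V)
    (hTwoEdges : ∃ e f : Ed, e ≠ f)
    (act : G → (ℕ → Ed) → ℕ → Ed) (hact : ActSpec S act)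
    (hfaithful : ∀ g : G, (∀ ξ : ℕ → Ed, InfWF S ξ → act g ξ = ξ) → g = 1) :
    TopFree S act := by
  haveI : Subsingleton V := hSingle
  intro α g β hWα hWβ hsrc ζ hζmem
  have hinfwf : ∀ ξ : ℕ → Ed, InfWF S ξ := fun ξ i => Subsingleton.elim _ _
  obtain ⟨N₀, hN₀⟩ := cylinder_of_interior19 S hζmem
  have hfix : ∀ η : InfPath S, (∀ i, i < N₀ → η.1 i = ζ.1 i) →
      ∀ n, act g (dropSeq (lenP β) η.1) n = η.1 (lenP α + n) := by
    intro η hη n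
    have hmem : InZ S β η.1 ∧ sActSeq S act α g β η.1 = η.1 := hN₀ η hη
    have h3 : prepSeq α (act g (dropSeq (lenP β) η.1)) (lenP α + n) =
        η.1 (lenP α + n) := congrFun hmem.2 (lenP α + n)
    rw [prepSeq_add19] at h3
    exact h3
  obtain ⟨e₀, f₀, hef⟩ := hTwoEdges
  have hlen : lenP α = lenP β := by
    by_contra hne
    rcases Nat.lt_or_ge (lenP α) (lenP β) with hlt | hge
    · -- lenP α < lenP β
      obtain ⟨e', he'⟩ := exists_ne_edge19 ⟨e₀, f₀, hef⟩ (ζ.1 (N₀ + lenP β))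
      set η' : InfPath S := ⟨Function.update ζ.1 (N₀ + lenP β) e', hinfwf _⟩ with hη'def
      have hη'cyl : ∀ i, i < N₀ → η'.1 i = ζ.1 i := by
        intro i hi
        exact Function.update_of_ne (by omega) _ _
      have h1 := hfix ζ (fun i _ => rfl) N₀
      have h2 := hfix η' hη'cyl N₀
      have hpos : η'.1 (lenP α + N₀) = ζ.1 (lenP α + N₀) :=
        Function.update_of_ne (by omega) _ _
      have hagree : ∀ i, i < N₀ → dropSeq (lenP β) ζ.1 i = dropSeq (lenP β) η'.1 i := by
        intro i hi
        show ζ.1 (i + lenP β) = Function.update ζ.1 (N₀ + lenP β) e' (i + lenP β)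
        rw [Function.update_of_ne (by omega)]
      have hneq : dropSeq (lenP β) ζ.1 N₀ ≠ dropSeq (lenP β) η'.1 N₀ := by
        show ζ.1 (N₀ + lenP β) ≠ Function.update ζ.1 (N₀ + lenP β) e' (N₀ + lenP β)
        rw [Function.update_self]
        exact fun hh => he' hh.symm
      exact act_ne19 S hact g hagree hneq (by rw [h1, h2, hpos])
    · -- lenP β < lenP α
      have hgt : lenP β < lenP α := lt_of_le_of_ne hge (fun hh => hne hh.symm)
      obtain ⟨e', he'⟩ := exists_ne_edge19 ⟨e₀, f₀, hef⟩ (ζ.1 (lenP α + N₀))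
      set η' : InfPath S := ⟨Function.update ζ.1 (lenP α + N₀) e', hinfwf _⟩ with hη'def
      have hη'cyl : ∀ i, i < N₀ → η'.1 i = ζ.1 i := by
        intro i hi
        exact Function.update_of_ne (by omega) _ _
      have h1 := hfix ζ (fun i _ => rfl) N₀
      have h2 := hfix η' hη'cyl N₀
      have hagree : ∀ i, i ≤ N₀ → dropSeq (lenP β) ζ.1 i = dropSeq (lenP β) η'.1 i := by
        intro i hi
        show ζ.1 (i + lenP β) = Function.update ζ.1 (lenP α + N₀) e' (i + lenP β)
        rw [Function.update_of_ne (by omega)]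
      have heq := act_agree19 S hact g hagree
      rw [h1, h2] at heq
      have h3 : η'.1 (lenP α + N₀) = e' := Function.update_self _ _ _
      rw [h3] at heq
      exact he' heq.symm
  have hζF : InZ S β ζ.1 ∧ sActSeq S act α g β ζ.1 = ζ.1 := hN₀ ζ (fun i _ => rfl)
  have hβtake : takeP S ζ.1 (lenP β) = β := hζF.1
  have hαtake : takeP S ζ.1 (lenP α) = α := by
    have h2 : prepSeq α (act g (dropSeq (lenP β) ζ.1)) = ζ.1 := hζF.2
    rw [← h2]
    exact takeP_prepSeq19 S α _
  have hαβ : α = β := by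
    rw [← hαtake, hlen]
    exact hβtake
  set τ : Pth V Ed := takeP S (dropSeq (lenP α) ζ.1) N₀ with hτdef
  have hlenτ : lenP τ = N₀ := lenP_takeP19 S N₀ _
  have hacts : ∀ ξ : ℕ → Ed, act g (prepSeq τ ξ) = prepSeq τ ξ := by
    intro ξ
    set X : ℕ → Ed := prepSeq (takeP S ζ.1 (lenP α + N₀)) ξ with hXdef
    have hXcyl : ∀ i, i < N₀ → X i = ζ.1 i := by
      intro i hi
      rw [hXdef, prepSeq_takeP19]
      simp [show i < lenP α + N₀ from by omega]
    have hXfix : ∀ n, act g (dropSeq (lenP β) X) n = X (lenP α + n) :=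
      hfix ⟨X, hinfwf X⟩ hXcyl
    have hdrop : dropSeq (lenP α) X = prepSeq τ ξ := by
      funext i
      show X (i + lenP α) = prepSeq τ ξ i
      rw [hXdef, prepSeq_takeP19, hτdef, prepSeq_takeP19]
      by_cases hi : i < N₀
      · have h4 : i + lenP α < lenP α + N₀ := by omega
        simp only [hi, h4, if_true]
        rfl
      · have h4 : ¬ (i + lenP α < lenP α + N₀) := by omega
        simp only [hi, h4, if_false]
        congr 1
        omega
    funext n
    have h5 := hXfix n
    rw [← hlen] at h5
    rw [hdrop] at h5
    have h6 : X (n + lenP α) = prepSeq τ ξ n := congrFun hdrop n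
    rw [Nat.add_comm (lenP α) n, h6] at h5
    exact h5
  have hactτ : actP S g τ = τ := by
    have h1 : takeP S (act g (prepSeq τ (fun _ => e₀))) (lenP τ) =
        takeP S (prepSeq τ (fun _ => e₀)) (lenP τ) := by rw [hacts]
    rw [hact, takeP_prepSeq19] at h1
    exact h1
  have hphi : phiP S g τ = 1 := by
    apply hfaithful
    intro ξ _
    apply seq_ext19 S
    intro n
    rw [hact]
    have h2 : takeP S (act g (prepSeq τ ξ)) (lenP τ + n) =
        takeP S (prepSeq τ ξ) (lenP τ + n) := by rw [hacts ξ]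
    rw [hact] at h2
    rw [takeP_add19 S (lenP τ) n (prepSeq τ ξ), takeP_prepSeq19, prepSeq_drop19] at h2
    rw [actP_compP19, hactτ] at h2
    have h3 := compP_left_cancel19 τ _ _ h2
    rw [h3]
  refine ⟨hαβ, τ, wfp_all19 S τ, Subsingleton.elim _ _,
    ⟨wfp_all19 S τ, hactτ, hphi⟩, ?_⟩
  show takeP S ζ.1 (lenP (compP α τ)) = compP α τ
  rw [lenP_compP19, takeP_add19 S (lenP α) (lenP τ) ζ.1, hαtake, hlenτ, ← hτdef]
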